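/- Let q : ℝ → ℝ be twice continuously differentiable, satisfy the Painlevé II equation q''(s) = s·q(s) + 2·q(s)³ for all s ∈ ℝ, and satisfy the decay bound: there is a constant C with |q(s)| ≤ C·e^{−s} and |q'(s)| ≤ C·e^{−s} for all s ≥ 0. Define F(s) := exp(−∫_s^∞ (x−s)·q(x)² dx), u₀₀(s) := ∫_s^∞ q(x)² dx, q₁ := q' + u₀₀·q, u₁₀(s) := ∫_s^∞ q₁(x)·q(x) dx, q₂(s) := s·q(s) − u₁₀(s)·q(s) + u₀₀(s)·q₁(s), u₂₀(s) := ∫_s^∞ q₂(x)·q(x) dx, and u₂₁(s) := ∫_s^∞ q₂(x)·q₁(x) dx. Then for every s ∈ ℝ, F(s)·(u₁₀(s)·u₂₀(s) − u₀₀(s)·u₂₁(s)) = (1/12)·F''(s) + (s/6)·F'''(s) − (1/24)·F⁽⁵⁾(s). -/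

import Mathlib

/-!
With `p = q'`, the Painlevé II equation makes `p² - x q² - q⁴` a primitive of `-q²`; from it
one finds primitives of the integrands of `u₁₀`, `u₂₀`, `u₂₁` that are polynomials in `x`, `q`,
`p`. Exponential decay makes all of them vanish at `+∞`, so they are the tail integrals. An
integration by parts turns `∫ₛ^∞ (x - s) q²` into `∫ₛ^∞ u₀₀`, hence `F' = u₀₀ F`, and every
derivative of `F` is a polynomial in `s`, `q`, `p`, `u₀₀` times `F`. The identity is then a
polynomial identity.
-/

open MeasureTheory Set Filter Asymptotics Real Topology

-- The weight `xⁿ` makes the class stable under `f ↦ x f`, as `q₂ = x q - ⋯` needs.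
def PolyExpDecay (f : ℝ → ℝ) : Prop :=
  ∃ n : ℕ, f =O[atTop] fun x => x ^ n * exp (-x)

theorem isBigO_pow_mul_exp_neg_of_le {m n : ℕ} (h : m ≤ n) :
    (fun x : ℝ => x ^ m * exp (-x)) =O[atTop] fun x => x ^ n * exp (-x) := by
  refine IsBigO.mul (IsBigO.of_bound 1 ?_) (isBigO_refl _ _)
  filter_upwards [eventually_ge_atTop 1] with x hx
  rw [one_mul, norm_pow, norm_pow, Real.norm_of_nonneg (by linarith)]
  exact pow_le_pow_right₀ hx h

namespace PolyExpDecay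

variable {f g : ℝ → ℝ}

theorem of_abs_le_mul_exp_neg {C : ℝ} (h : ∀ x, 0 ≤ x → |f x| ≤ C * exp (-x)) :
    PolyExpDecay f :=
  ⟨0, IsBigO.of_bound C <| by
    filter_upwards [eventually_ge_atTop 0] with x hx
    simpa using h x hx⟩

theorem tendsto_zero (hf : PolyExpDecay f) : Tendsto f atTop (𝓝 0) :=
  let ⟨n, h⟩ := hf
  h.trans_tendsto (tendsto_pow_mul_exp_neg_atTop_nhds_zero n)

theorem add (hf : PolyExpDecay f) (hg : PolyExpDecay g) : PolyExpDecay fun x => f x + g x :=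
  let ⟨m, hm⟩ := hf
  let ⟨n, hn⟩ := hg
  ⟨max m n, (hm.trans (isBigO_pow_mul_exp_neg_of_le (le_max_left m n))).add
    (hn.trans (isBigO_pow_mul_exp_neg_of_le (le_max_right m n)))⟩

theorem sub (hf : PolyExpDecay f) (hg : PolyExpDecay g) : PolyExpDecay fun x => f x - g x :=
  let ⟨m, hm⟩ := hf
  let ⟨n, hn⟩ := hg
  ⟨max m n, (hm.trans (isBigO_pow_mul_exp_neg_of_le (le_max_left m n))).sub
    (hn.trans (isBigO_pow_mul_exp_neg_of_le (le_max_right m n)))⟩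

theorem const_mul (hf : PolyExpDecay f) (c : ℝ) : PolyExpDecay fun x => c * f x :=
  let ⟨n, h⟩ := hf
  ⟨n, h.const_mul_left c⟩

theorem div_const (hf : PolyExpDecay f) (c : ℝ) : PolyExpDecay fun x => f x / c := by
  simpa only [div_eq_inv_mul] using hf.const_mul c⁻¹

theorem neg (hf : PolyExpDecay f) : PolyExpDecay fun x => -f x :=
  let ⟨n, h⟩ := hf
  ⟨n, h.neg_left⟩

theorem mul (hf : PolyExpDecay f) (hg : PolyExpDecay g) : PolyExpDecay fun x => f x * g x :=
  let ⟨n, h⟩ := hf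
  ⟨n, by simpa using h.mul (hg.tendsto_zero.isBigO_one ℝ)⟩

theorem pow (hf : PolyExpDecay f) {k : ℕ} (hk : k ≠ 0) : PolyExpDecay fun x => f x ^ k := by
  obtain ⟨k, rfl⟩ := Nat.exists_eq_succ_of_ne_zero hk
  induction k with
  | zero => simpa using hf
  | succ k ih => simpa only [pow_succ] using (ih k.succ_ne_zero).mul hf

theorem id_mul (hf : PolyExpDecay f) : PolyExpDecay fun x => x * f x :=
  let ⟨n, h⟩ := hf
  ⟨n + 1, ((isBigO_refl (fun x : ℝ => x) atTop).mul h).congr_right fun x => by ring⟩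

theorem id_sub_mul (hf : PolyExpDecay f) (c : ℝ) : PolyExpDecay fun x => (x - c) * f x := by
  simpa only [sub_mul] using hf.id_mul.sub (hf.const_mul c)

theorem integrableOn_Ioi (hf : PolyExpDecay f) (hc : Continuous f) (a : ℝ) :
    IntegrableOn f (Ioi a) := by
  obtain ⟨n, h⟩ := hf
  refine integrable_of_isBigO_exp_neg one_half_pos hc.continuousOn (h.trans ?_)
  refine ((isLittleO_pow_exp_pos_mul_atTop n one_half_pos).isBigO.mul
    (isBigO_refl (fun x : ℝ => exp (-x)) atTop)).congr_right fun x => ?_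
  rw [← exp_add]
  ring_nf

end PolyExpDecay

theorem integral_Ioi_eq_of_hasDerivAt_neg {f g : ℝ → ℝ} {s : ℝ}
    (hg : ∀ x, HasDerivAt g (-f x) x) (hg0 : Tendsto g atTop (𝓝 0))
    (hf : IntegrableOn f (Ioi s)) : ∫ x in Ioi s, f x = g s := by
  have h := integral_Ioi_of_hasDerivAt_of_tendsto' (fun x _ => hg x) hf.neg hg0
  rw [integral_neg] at h
  linarith

theorem hasDerivAt_integral_Ioi {f : ℝ → ℝ} (hf : Continuous f)
    (hint : ∀ a, IntegrableOn f (Ioi a)) (s : ℝ) :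
    HasDerivAt (fun t => ∫ x in Ioi t, f x) (-f s) s := by
  have h := (intervalIntegral.integral_hasDerivAt_right (hf.intervalIntegrable 0 s)
    (hf.stronglyMeasurableAtFilter _ _) hf.continuousAt).const_sub (∫ x in Ioi 0, f x)
  refine h.congr_of_eventuallyEq (Eventually.of_forall fun t => ?_)
  dsimp only
  rw [← intervalIntegral.integral_Ioi_sub_Ioi' (hint 0) (hint t), sub_sub_cancel]

theorem hasDerivAt_exp_neg_integral_Ioi {f : ℝ → ℝ} (hf : Continuous f)
    (hint : ∀ a, IntegrableOn f (Ioi a)) (s : ℝ) :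
    HasDerivAt (fun t => exp (-∫ x in Ioi t, f x)) (f s * exp (-∫ x in Ioi s, f x)) s := by
  simpa [mul_comm] using (hasDerivAt_integral_Ioi hf hint s).neg.exp

theorem iteratedDeriv_succ_eq_of_hasDerivAt {F a G G' : ℝ → ℝ} {n : ℕ}
    (hF : ∀ x, HasDerivAt F (a x * F x) x) (hn : iteratedDeriv n F = fun x => G x * F x)
    (hG : ∀ x, HasDerivAt G (G' x) x) :
    iteratedDeriv (n + 1) F = fun x => (G' x + G x * a x) * F x := by
  rw [iteratedDeriv_succ, hn]
  funext x
  exact (((hG x).mul (hF x)).congr_deriv (by ring)).deriv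

namespace PainleveII

structure IsSolution (q p : ℝ → ℝ) : Prop where
  hasDerivAt_q : ∀ x, HasDerivAt q (p x) x
  hasDerivAt_p : ∀ x, HasDerivAt p (x * q x + 2 * q x ^ 3) x

-- Closed forms of the paper's `u₀₀, q₁, u₁₀, q₂, u₂₀, u₂₁`, with `p` in place of `q'`.
noncomputable def u00 (q p : ℝ → ℝ) (x : ℝ) : ℝ := p x ^ 2 - x * q x ^ 2 - q x ^ 4

noncomputable def q1 (q p : ℝ → ℝ) (x : ℝ) : ℝ := p x + u00 q p x * q x

noncomputable def u10 (q p : ℝ → ℝ) (x : ℝ) : ℝ := (u00 q p x ^ 2 - q x ^ 2) / 2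

noncomputable def q2 (q p : ℝ → ℝ) (x : ℝ) : ℝ :=
  x * q x - u10 q p x * q x + u00 q p x * q1 q p x

noncomputable def u20 (q p : ℝ → ℝ) (x : ℝ) : ℝ :=
  (x * u00 q p x - q x * p x) / 3 + u00 q p x ^ 3 / 6 - u00 q p x * q x ^ 2 / 2

noncomputable def u21 (q p : ℝ → ℝ) (x : ℝ) : ℝ :=
  (u00 q p x ^ 4 - 3 * q x ^ 4) / 8 - 3 * (u00 q p x ^ 2 * q x ^ 2) / 4
    - (x * q x ^ 2 + u00 q p x) / 2 - u00 q p x * q x * p x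

variable {q p F : ℝ → ℝ}

theorem isSolution_deriv (hq : ContDiff ℝ 2 q)
    (hP2 : ∀ s, iteratedDeriv 2 q s = s * q s + 2 * q s ^ 3) : IsSolution q (deriv q) where
  hasDerivAt_q x := (hq.differentiable two_ne_zero x).hasDerivAt
  hasDerivAt_p x := by
    have h := (hq.differentiable_iteratedDeriv 1 (by norm_num) x).hasDerivAt
    rwa [← iteratedDeriv_succ, hP2, iteratedDeriv_one] at h

namespace IsSolution

theorem continuous_q (h : IsSolution q p) : Continuous q :=
  continuous_iff_continuousAt.2 fun x => (h.hasDerivAt_q x).continuousAt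

theorem continuous_p (h : IsSolution q p) : Continuous p :=
  continuous_iff_continuousAt.2 fun x => (h.hasDerivAt_p x).continuousAt

theorem hasDerivAt_u00 (h : IsSolution q p) (x : ℝ) : HasDerivAt (u00 q p) (-(q x ^ 2)) x :=
  ((((h.hasDerivAt_p x).pow 2).sub ((hasDerivAt_id' x).mul ((h.hasDerivAt_q x).pow 2))).sub
    ((h.hasDerivAt_q x).pow 4)).congr_deriv (by simp only [Pi.pow_apply]; ring)

theorem hasDerivAt_u10 (h : IsSolution q p) (x : ℝ) :
    HasDerivAt (u10 q p) (-(q1 q p x * q x)) x :=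
  ((((h.hasDerivAt_u00 x).pow 2).sub ((h.hasDerivAt_q x).pow 2)).div_const 2).congr_deriv
    (by simp only [q1]; ring)

theorem hasDerivAt_u20 (h : IsSolution q p) (x : ℝ) :
    HasDerivAt (u20 q p) (-(q2 q p x * q x)) x :=
  ((((((hasDerivAt_id' x).mul (h.hasDerivAt_u00 x)).sub
    ((h.hasDerivAt_q x).mul (h.hasDerivAt_p x))).div_const 3).add
    (((h.hasDerivAt_u00 x).pow 3).div_const 6)).sub
    (((h.hasDerivAt_u00 x).mul ((h.hasDerivAt_q x).pow 2)).div_const 2)).congr_deriv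
    (by simp only [Pi.pow_apply, q2, q1, u10, u00]; ring)

theorem hasDerivAt_u21 (h : IsSolution q p) (x : ℝ) :
    HasDerivAt (u21 q p) (-(q2 q p x * q1 q p x)) x := by
  have hu := h.hasDerivAt_u00 x
  have hq := h.hasDerivAt_q x
  refine ((((((hu.pow 4).sub ((hq.pow 4).const_mul 3)).div_const 8).sub
    ((((hu.pow 2).mul (hq.pow 2)).const_mul 3).div_const 4)).sub
    ((((hasDerivAt_id' x).mul (hq.pow 2)).add hu).div_const 2)).sub
    ((hu.mul hq).mul (h.hasDerivAt_p x))).congr_deriv ?_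
  simp only [Pi.pow_apply, Pi.mul_apply, q2, q1, u10, u00]
  ring

theorem continuous_u00 (h : IsSolution q p) : Continuous (u00 q p) :=
  continuous_iff_continuousAt.2 fun x => (h.hasDerivAt_u00 x).continuousAt

theorem continuous_q1 (h : IsSolution q p) : Continuous (q1 q p) :=
  h.continuous_p.add (h.continuous_u00.mul h.continuous_q)

theorem continuous_u10 (h : IsSolution q p) : Continuous (u10 q p) :=
  continuous_iff_continuousAt.2 fun x => (h.hasDerivAt_u10 x).continuousAt

theorem continuous_q2 (h : IsSolution q p) : Continuous (q2 q p) :=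
  ((continuous_id.mul h.continuous_q).sub (h.continuous_u10.mul h.continuous_q)).add
    (h.continuous_u00.mul h.continuous_q1)

end IsSolution

theorem polyExpDecay_u00 (hq : PolyExpDecay q) (hp : PolyExpDecay p) : PolyExpDecay (u00 q p) :=
  ((hp.pow two_ne_zero).sub (hq.pow two_ne_zero).id_mul).sub (hq.pow four_ne_zero)

theorem polyExpDecay_q1 (hq : PolyExpDecay q) (hp : PolyExpDecay p) : PolyExpDecay (q1 q p) :=
  hp.add ((polyExpDecay_u00 hq hp).mul hq)

theorem polyExpDecay_u10 (hq : PolyExpDecay q) (hp : PolyExpDecay p) : PolyExpDecay (u10 q p) :=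
  (((polyExpDecay_u00 hq hp).pow two_ne_zero).sub (hq.pow two_ne_zero)).div_const 2

theorem polyExpDecay_q2 (hq : PolyExpDecay q) (hp : PolyExpDecay p) : PolyExpDecay (q2 q p) :=
  (hq.id_mul.sub ((polyExpDecay_u10 hq hp).mul hq)).add
    ((polyExpDecay_u00 hq hp).mul (polyExpDecay_q1 hq hp))

theorem polyExpDecay_u20 (hq : PolyExpDecay q) (hp : PolyExpDecay p) : PolyExpDecay (u20 q p) := by
  have hu := polyExpDecay_u00 hq hp
  exact (((hu.id_mul.sub (hq.mul hp)).div_const 3).add ((hu.pow three_ne_zero).div_const 6)).sub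
    ((hu.mul (hq.pow two_ne_zero)).div_const 2)

theorem polyExpDecay_u21 (hq : PolyExpDecay q) (hp : PolyExpDecay p) : PolyExpDecay (u21 q p) := by
  have hu := polyExpDecay_u00 hq hp
  exact (((((hu.pow four_ne_zero).sub ((hq.pow four_ne_zero).const_mul 3)).div_const 8).sub
    ((((hu.pow two_ne_zero).mul (hq.pow two_ne_zero)).const_mul 3).div_const 4)).sub
    (((hq.pow two_ne_zero).id_mul.add hu).div_const 2)).sub ((hu.mul hq).mul hp)

theorem integral_Ioi_sq (h : IsSolution q p) (hq : PolyExpDecay q) (hp : PolyExpDecay p)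
    (s : ℝ) : ∫ x in Ioi s, q x ^ 2 = u00 q p s :=
  integral_Ioi_eq_of_hasDerivAt_neg h.hasDerivAt_u00 (polyExpDecay_u00 hq hp).tendsto_zero
    ((hq.pow two_ne_zero).integrableOn_Ioi (h.continuous_q.pow 2) s)

theorem integral_Ioi_q1_mul (h : IsSolution q p) (hq : PolyExpDecay q) (hp : PolyExpDecay p)
    (s : ℝ) : ∫ x in Ioi s, q1 q p x * q x = u10 q p s :=
  integral_Ioi_eq_of_hasDerivAt_neg h.hasDerivAt_u10 (polyExpDecay_u10 hq hp).tendsto_zero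
    (((polyExpDecay_q1 hq hp).mul hq).integrableOn_Ioi (h.continuous_q1.mul h.continuous_q) s)

theorem integral_Ioi_q2_mul (h : IsSolution q p) (hq : PolyExpDecay q) (hp : PolyExpDecay p)
    (s : ℝ) : ∫ x in Ioi s, q2 q p x * q x = u20 q p s :=
  integral_Ioi_eq_of_hasDerivAt_neg h.hasDerivAt_u20 (polyExpDecay_u20 hq hp).tendsto_zero
    (((polyExpDecay_q2 hq hp).mul hq).integrableOn_Ioi (h.continuous_q2.mul h.continuous_q) s)

theorem integral_Ioi_q2_mul_q1 (h : IsSolution q p) (hq : PolyExpDecay q)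
    (hp : PolyExpDecay p) (s : ℝ) : ∫ x in Ioi s, q2 q p x * q1 q p x = u21 q p s :=
  integral_Ioi_eq_of_hasDerivAt_neg h.hasDerivAt_u21 (polyExpDecay_u21 hq hp).tendsto_zero
    (((polyExpDecay_q2 hq hp).mul (polyExpDecay_q1 hq hp)).integrableOn_Ioi
      (h.continuous_q2.mul h.continuous_q1) s)

theorem integral_Ioi_sub_mul_sq (h : IsSolution q p) (hq : PolyExpDecay q)
    (hp : PolyExpDecay p) (s : ℝ) :
    ∫ x in Ioi s, (x - s) * q x ^ 2 = ∫ x in Ioi s, u00 q p x := by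
  have hu := polyExpDecay_u00 hq hp
  have key := integral_Ioi_mul_deriv_eq_deriv_mul (a := s) (a' := 0) (b' := 0)
    (u := fun x => x - s) (v := fun x => -u00 q p x) (u' := fun _ => 1)
    (v' := fun x => q x ^ 2) (fun x _ => (hasDerivAt_id' x).sub_const s)
    (fun x _ => (h.hasDerivAt_u00 x).neg.congr_deriv (neg_neg _)) ?_ ?_ ?_ ?_
  · simpa [integral_neg] using key
  · exact ((hq.pow two_ne_zero).id_sub_mul s).integrableOn_Ioi
      ((continuous_sub_right s).mul (h.continuous_q.pow 2)) s
  · simpa only [Pi.mul_def, one_mul] using hu.neg.integrableOn_Ioi h.continuous_u00.neg s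
  · refine (Continuous.tendsto' ?_ s 0 (by simp)).mono_left nhdsWithin_le_nhds
    exact (continuous_sub_right s).mul h.continuous_u00.neg
  · exact (hu.neg.id_sub_mul s).tendsto_zero

theorem hasDerivAt_exp_neg_integral_Ioi_sub_mul_sq (h : IsSolution q p) (hq : PolyExpDecay q)
    (hp : PolyExpDecay p) (s : ℝ) :
    HasDerivAt (fun t => exp (-∫ x in Ioi t, (x - t) * q x ^ 2))
      (u00 q p s * exp (-∫ x in Ioi s, (x - s) * q x ^ 2)) s := by
  simp_rw [integral_Ioi_sub_mul_sq h hq hp]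
  exact hasDerivAt_exp_neg_integral_Ioi h.continuous_u00
    ((polyExpDecay_u00 hq hp).integrableOn_Ioi h.continuous_u00) s

theorem iteratedDeriv_two_eq (h : IsSolution q p) (hF : ∀ x, HasDerivAt F (u00 q p x * F x) x) :
    iteratedDeriv 2 F = fun x => (u00 q p x ^ 2 - q x ^ 2) * F x := by
  have h1 : iteratedDeriv 1 F = fun x => u00 q p x * F x := by
    rw [iteratedDeriv_one]
    exact funext fun x => (hF x).deriv
  exact (iteratedDeriv_succ_eq_of_hasDerivAt hF h1 h.hasDerivAt_u00).trans
    (funext fun x => by ring)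

theorem iteratedDeriv_three_eq (h : IsSolution q p)
    (hF : ∀ x, HasDerivAt F (u00 q p x * F x) x) :
    iteratedDeriv 3 F = fun x =>
      (u00 q p x ^ 3 - 3 * (u00 q p x * q x ^ 2) - 2 * (q x * p x)) * F x :=
  (iteratedDeriv_succ_eq_of_hasDerivAt hF (iteratedDeriv_two_eq h hF)
    fun x => ((h.hasDerivAt_u00 x).pow 2).sub ((h.hasDerivAt_q x).pow 2)).trans
    (funext fun x => by ring)

theorem iteratedDeriv_four_eq (h : IsSolution q p)
    (hF : ∀ x, HasDerivAt F (u00 q p x * F x) x) :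
    iteratedDeriv 4 F = fun x => (u00 q p x ^ 4 - 6 * (u00 q p x ^ 2 * q x ^ 2)
      - 8 * (u00 q p x * q x * p x) - 2 * p x ^ 2 - 2 * (x * q x ^ 2) - q x ^ 4) * F x := by
  have hu := h.hasDerivAt_u00
  have hq := h.hasDerivAt_q
  refine (iteratedDeriv_succ_eq_of_hasDerivAt hF (iteratedDeriv_three_eq h hF)
    fun x => (((hu x).pow 3).sub (((hu x).mul ((hq x).pow 2)).const_mul 3)).sub
      (((hq x).mul (h.hasDerivAt_p x)).const_mul 2)).trans (funext fun x => ?_)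
  simp only [Pi.pow_apply]
  ring

theorem iteratedDeriv_five_eq (h : IsSolution q p)
    (hF : ∀ x, HasDerivAt F (u00 q p x * F x) x) :
    iteratedDeriv 5 F = fun x => (u00 q p x ^ 5 - 10 * u00 q p x ^ 3 * q x ^ 2
      - 20 * u00 q p x ^ 2 * q x * p x - 10 * u00 q p x * p x ^ 2
      - 10 * x * u00 q p x * q x ^ 2 - 5 * u00 q p x * q x ^ 4 - 8 * x * q x * p x
      - 4 * q x ^ 3 * p x - 2 * q x ^ 2) * F x := by
  have hu := h.hasDerivAt_u00
  have hq := h.hasDerivAt_q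
  have hp := h.hasDerivAt_p
  refine (iteratedDeriv_succ_eq_of_hasDerivAt hF (iteratedDeriv_four_eq h hF)
    fun x => (((((((hu x).pow 4).sub ((((hu x).pow 2).mul ((hq x).pow 2)).const_mul 6)).sub
      ((((hu x).mul (hq x)).mul (hp x)).const_mul 8)).sub (((hp x).pow 2).const_mul 2)).sub
      (((hasDerivAt_id' x).mul ((hq x).pow 2)).const_mul 2)).sub ((hq x).pow 4))).trans
    (funext fun x => ?_)
  simp only [Pi.pow_apply, Pi.mul_apply]
  ring

theorem mul_u10_mul_u20_sub_u00_mul_u21 (h : IsSolution q p)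
    (hF : ∀ x, HasDerivAt F (u00 q p x * F x) x) (s : ℝ) :
    F s * (u10 q p s * u20 q p s - u00 q p s * u21 q p s) =
      (1 / 12) * iteratedDeriv 2 F s + (s / 6) * iteratedDeriv 3 F s
        - (1 / 24) * iteratedDeriv 5 F s := by
  rw [iteratedDeriv_two_eq h hF, iteratedDeriv_three_eq h hF, iteratedDeriv_five_eq h hF]
  simp only [u10, u20, u21, u00]
  ring

end PainleveII

/-- The identity `[u₁₀·u₂₀ - u₀₀·u₂₁]·F = (1/12)·F'' + (s/6)·F''' - (1/24)·F⁽⁵⁾`, where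
`F(s) = exp(-∫_s^∞ (x-s) q(x)² dx)`, `u₀₀(s) = ∫_s^∞ q(x)² dx`, `q₁ = q' + u₀₀·q`,
`u₁₀(s) = ∫_s^∞ q₁(x) q(x) dx`, `q₂ = s·q - u₁₀·q + u₀₀·q₁`,
`u₂₀(s) = ∫_s^∞ q₂(x) q(x) dx`, `u₂₁(s) = ∫_s^∞ q₂(x) q₁(x) dx`, and `q` is a
Painlevé II solution with exponential decay at `+∞`. -/
theorem F_C_eq (q F u00 q1 u10 q2 u20 u21 : ℝ → ℝ) (hq : ContDiff ℝ 2 q)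
    (hP2 : ∀ s : ℝ, iteratedDeriv 2 q s = s * q s + 2 * q s ^ 3)
    (C : ℝ)
    (hdecay : ∀ s : ℝ, 0 ≤ s →
      |q s| ≤ C * Real.exp (-s) ∧ |deriv q s| ≤ C * Real.exp (-s))
    (hF : ∀ s : ℝ, F s = Real.exp (-(∫ x in Set.Ioi s, (x - s) * q x ^ 2)))
    (hu00 : ∀ s : ℝ, u00 s = ∫ x in Set.Ioi s, q x ^ 2)
    (hq1 : ∀ s : ℝ, q1 s = deriv q s + u00 s * q s)
    (hu10 : ∀ s : ℝ, u10 s = ∫ x in Set.Ioi s, q1 x * q x)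
    (hq2 : ∀ s : ℝ, q2 s = s * q s - u10 s * q s + u00 s * q1 s)
    (hu20 : ∀ s : ℝ, u20 s = ∫ x in Set.Ioi s, q2 x * q x)
    (hu21 : ∀ s : ℝ, u21 s = ∫ x in Set.Ioi s, q2 x * q1 x) :
    ∀ s : ℝ, F s * (u10 s * u20 s - u00 s * u21 s) =
      (1 / 12) * iteratedDeriv 2 F s + (s / 6) * iteratedDeriv 3 F s
        - (1 / 24) * iteratedDeriv 5 F s := by
  have h := PainleveII.isSolution_deriv hq hP2
  have hqd : PolyExpDecay q := .of_abs_le_mul_exp_neg fun s hs => (hdecay s hs).1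
  have hpd : PolyExpDecay (deriv q) := .of_abs_le_mul_exp_neg fun s hs => (hdecay s hs).2
  have e00 : u00 = PainleveII.u00 q (deriv q) :=
    funext fun s => (hu00 s).trans (PainleveII.integral_Ioi_sq h hqd hpd s)
  have e1 : q1 = PainleveII.q1 q (deriv q) := funext fun s => by rw [hq1, e00]; rfl
  have e10 : u10 = PainleveII.u10 q (deriv q) := funext fun s => by
    rw [hu10, e1, PainleveII.integral_Ioi_q1_mul h hqd hpd]
  have e2 : q2 = PainleveII.q2 q (deriv q) := funext fun s => by rw [hq2, e10, e00, e1]; rfl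
  have e20 : u20 = PainleveII.u20 q (deriv q) := funext fun s => by
    rw [hu20, e2, PainleveII.integral_Ioi_q2_mul h hqd hpd]
  have e21 : u21 = PainleveII.u21 q (deriv q) := funext fun s => by
    rw [hu21, e2, e1, PainleveII.integral_Ioi_q2_mul_q1 h hqd hpd]
  obtain rfl : F = _ := funext hF
  rw [e00, e10, e20, e21]
  exact PainleveII.mul_u10_mul_u20_sub_u00_mul_u21 h
    (PainleveII.hasDerivAt_exp_neg_integral_Ioi_sub_mul_sq h hqd hpd)
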